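/- Let A0 > 0 and B0 ≥ 0 be real numbers, let I be a nonempty finite index set of candidate splits, and for each i ∈ I let ΔE_i > 0 and ΔL_i be real numbers. Let M be a real number such that B0 + M > 0 and B0 + ΔL_i + M > 0 for all i. Then there exists i ∈ I with A0/(B0 + M) < (A0 + ΔE_i)/(B0 + ΔL_i + M) if and only if M > A0·min_{i∈I}(ΔL_i/ΔE_i) − B0. Consequently, the smallest stabilizer admitting a valid split is determined by the split minimizing ΔL_i/ΔE_i, and STAIR can compute the optimal M and the best split in one step. -/

import Mathlib

/-! Cross-multiplying, a split raises the ratio `A0 / (B0 + M)` exactly when its marginal cost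
`ΔL_i / ΔE_i` lies below `(B0 + M) / A0`, and some split does so exactly when the cheapest one does. -/

theorem div_lt_add_div_add_iff_div_lt_div {a b e l : ℝ} (ha : 0 < a) (hb : 0 < b) (he : 0 < e)
    (hbl : 0 < b + l) : a / b < (a + e) / (b + l) ↔ l / e < b / a := by
  rw [div_lt_div_iff₀ hb hbl, div_lt_div_iff₀ he ha]
  constructor <;> intro h <;> linarith

theorem stair_optimal_M_general {ι : Type*} (I : Finset ι) (hI : I.Nonempty)
    (A0 B0 : ℝ) (hA0 : 0 < A0)
    (ΔE ΔL : ι → ℝ) (hΔE : ∀ i ∈ I, 0 < ΔE i)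
    (M : ℝ) (h1 : 0 < B0 + M) (h2 : ∀ i ∈ I, 0 < B0 + ΔL i + M) :
    (∃ i ∈ I, A0 / (B0 + M) < (A0 + ΔE i) / (B0 + ΔL i + M)) ↔
      M > A0 * I.inf' hI (fun i => ΔL i / ΔE i) - B0 := by
  have split_iff (i : ι) (hi : i ∈ I) :
      A0 / (B0 + M) < (A0 + ΔE i) / (B0 + ΔL i + M) ↔ ΔL i / ΔE i < (B0 + M) / A0 := by
    rw [add_right_comm]
    exact div_lt_add_div_add_iff_div_lt_div hA0 h1 (hΔE i hi) (add_right_comm B0 _ M ▸ h2 i hi)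
  rw [gt_iff_lt, sub_lt_iff_lt_add', ← lt_div_iff₀' hA0, Finset.inf'_lt_iff]
  exact exists_congr fun i => and_congr_right (split_iff i)

/-- There exists a valid split at stabilizer `M` iff
`M > A0 * min_i (ΔL_i / ΔE_i) - B0`: the smallest stabilizer admitting a
valid split is determined by the split minimizing `ΔL_i / ΔE_i`. -/
theorem stair_optimal_M {ι : Type*} (I : Finset ι) (hI : I.Nonempty)
    (A0 B0 : ℝ) (hA0 : 0 < A0) (hB0 : 0 ≤ B0)
    (ΔE ΔL : ι → ℝ) (hΔE : ∀ i ∈ I, 0 < ΔE i)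
    (M : ℝ) (h1 : 0 < B0 + M) (h2 : ∀ i ∈ I, 0 < B0 + ΔL i + M) :
    (∃ i ∈ I, A0 / (B0 + M) < (A0 + ΔE i) / (B0 + ΔL i + M)) ↔
      M > A0 * I.inf' hI (fun i => ΔL i / ΔE i) - B0 :=
  stair_optimal_M_general I hI A0 B0 hA0 ΔE ΔL hΔE M h1 h2
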